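/- If a one-sided shift space X contains a nonempty open set U consisting entirely of eventually periodic points, then X contains an isolated eventually periodic point, namely a point of the form αβ^∞ (a word α followed by the periodic repetition of a word β) which is isolated in X. -/

import Mathlib

/-!
The closed sets `{x | σ^[m + p] x = σ^[m] x}` with `p > 0` cover `V ∩ X`, a Baire space since it
is open in the closed, hence completely metrizable, subset `X` of `A^ℕ`. So one of them contains
a nonempty relatively open part of `V ∩ X`. A point of such a set is determined by its first
`m + p` letters, hence a long enough cylinder around a point of that part meets `X` in that
point alone.
-/

open Function Set

/-- The shift map on one-sided sequences. -/
def shiftMap {A : Type*} : (ℕ → A) → (ℕ → A) := fun x n => x (n + 1)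

/-- A one-sided shift space: a closed, shift-invariant subset of `A^ℕ`. -/
def IsShiftSpace {A : Type*} [TopologicalSpace A] (X : Set (ℕ → A)) : Prop :=
  IsClosed X ∧ ∀ x ∈ X, shiftMap x ∈ X

/-- A point is eventually periodic (equivalently, of the form `αβ^∞`) if
`σ^n(x) = σ^m(x)` for some `n ≠ m`. -/
def EventuallyPeriodic {A : Type*} (x : ℕ → A) : Prop :=
  ∃ p m : ℕ, 0 < p ∧ shiftMap^[m + p] x = shiftMap^[m] x

open PiNat

theorem exists_isOpen_inter_nonempty_subset_of_subset_iUnion {Z ι : Type*}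
    [TopologicalSpace Z] [Countable ι] {Y : Set Z} [BaireSpace Y] [Nonempty Y]
    {F : ι → Set Z} (hF : ∀ i, IsClosed (F i)) (hY : Y ⊆ ⋃ i, F i) :
    ∃ i, ∃ W : Set Z, IsOpen W ∧ (W ∩ Y).Nonempty ∧ W ∩ Y ⊆ F i := by
  have hcover : ⋃ i, ((↑) : ↥Y → Z) ⁻¹' F i = univ :=
    eq_univ_of_forall fun y ↦ by simpa using hY y.2
  obtain ⟨i, y, hy⟩ := nonempty_interior_of_iUnion_of_closed
    (fun i ↦ (hF i).preimage continuous_subtype_val) hcover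
  obtain ⟨W, hW, hWY⟩ := isOpen_induced_iff.mp (isOpen_interior (s := ((↑) : Y → Z) ⁻¹' F i))
  refine ⟨i, W, hW, ⟨y, ?_, y.2⟩, fun z hz ↦ ?_⟩
  · exact (hWY ▸ hy : y ∈ ((↑) : ↥Y → Z) ⁻¹' W)
  · have hz' : (⟨z, hz.2⟩ : Y) ∈ interior ((↑) ⁻¹' F i) := hWY ▸ hz.1
    exact (interior_subset hz' :)

theorem PiNat.exists_cylinder_subset {E : ℕ → Type*} [∀ n, TopologicalSpace (E n)]
    [∀ n, DiscreteTopology (E n)] {s : Set (∀ n, E n)} (hs : IsOpen s) {x : ∀ n, E n}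
    (hx : x ∈ s) : ∃ n, cylinder x n ⊆ s := by
  obtain ⟨_, ⟨y, n, rfl⟩, hxy, hsub⟩ :=
    (isTopologicalBasis_cylinders E).exists_subset_of_mem_open hx hs
  exact ⟨n, mem_cylinder_iff_eq.mp hxy ▸ hsub⟩

section Shift

variable {A : Type*}

theorem shiftMap_iterate_apply (x : ℕ → A) (m k : ℕ) : shiftMap^[m] x k = x (m + k) := by
  induction m generalizing x with
  | zero => simp
  | succ m ih =>
    rw [iterate_succ_apply, ih]
    simp only [shiftMap, Nat.add_right_comm]

theorem continuous_shiftMap [TopologicalSpace A] : Continuous (shiftMap : (ℕ → A) → ℕ → A) :=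
  continuous_pi fun n ↦ continuous_apply (n + 1)

theorem isClosed_setOf_shiftMap_iterate_eq [TopologicalSpace A] [T2Space A] (m p : ℕ) :
    IsClosed {x : ℕ → A | shiftMap^[m + p] x = shiftMap^[m] x} :=
  isClosed_eq (continuous_shiftMap.iterate _) (continuous_shiftMap.iterate _)

theorem apply_add_of_shiftMap_iterate_eq {x : ℕ → A} {m p : ℕ}
    (hx : shiftMap^[m + p] x = shiftMap^[m] x) {k : ℕ} (hk : m ≤ k) : x (k + p) = x k := by
  have := congrFun hx (k - m)
  rwa [shiftMap_iterate_apply, shiftMap_iterate_apply, Nat.add_right_comm,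
    Nat.add_sub_cancel' hk] at this

theorem eq_of_mem_cylinder_of_shiftMap_iterate_eq {x y : ℕ → A} {m p : ℕ} (hp : 0 < p)
    (hx : shiftMap^[m + p] x = shiftMap^[m] x) (hy : shiftMap^[m + p] y = shiftMap^[m] y)
    (hxy : x ∈ cylinder y (m + p)) : x = y := by
  funext k
  induction k using Nat.strong_induction_on with
  | _ k ih =>
    by_cases hk : k < m + p
    · exact hxy k hk
    · obtain ⟨j, rfl⟩ : ∃ j, k = j + p := ⟨k - p, by omega⟩
      rw [apply_add_of_shiftMap_iterate_eq hx (by omega),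
        apply_add_of_shiftMap_iterate_eq hy (by omega)]
      exact ih j (by omega)

theorem cylinder_inter_eq_singleton_of_subset {X : Set (ℕ → A)} {x : ℕ → A} (hx : x ∈ X)
    {m p N : ℕ} (hp : 0 < p)
    (hsub : cylinder x N ∩ X ⊆ {y | shiftMap^[m + p] y = shiftMap^[m] y}) :
    cylinder x (max N (m + p)) ∩ X = {x} := by
  refine eq_singleton_iff_unique_mem.mpr ⟨⟨self_mem_cylinder x _, hx⟩, fun y ⟨hyx, hyX⟩ ↦ ?_⟩
  have hxS := hsub ⟨self_mem_cylinder x N, hx⟩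
  have hyS := hsub ⟨cylinder_anti x (le_max_left _ _) hyx, hyX⟩
  exact eq_of_mem_cylinder_of_shiftMap_iterate_eq hp hyS hxS
    (cylinder_anti x (le_max_right _ _) hyx)

end Shift

theorem exists_isolated_eventuallyPeriodic_general {A : Type*}
    [TopologicalSpace A] [DiscreteTopology A]
    (X : Set (ℕ → A)) (hX : IsShiftSpace X)
    (V : Set (ℕ → A)) (hV : IsOpen V) (hne : (V ∩ X).Nonempty)
    (hep : ∀ x ∈ V ∩ X, EventuallyPeriodic x) :
    ∃ x ∈ X, EventuallyPeriodic x ∧ ∃ U : Set (ℕ → A), IsOpen U ∧ U ∩ X = {x} := by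
  have := hX.1.isCompletelyMetrizableSpace
  have : BaireSpace ↥(V ∩ X) :=
    (Topology.IsOpenEmbedding.inclusion inter_subset_right
      (by simpa using hV.preimage continuous_subtype_val)).baireSpace
  have := hne.to_subtype
  have hcover : V ∩ X ⊆ ⋃ pm : ℕ × ℕ,
      {x | shiftMap^[pm.2 + (pm.1 + 1)] x = shiftMap^[pm.2] x} := fun x hx ↦ by
    obtain ⟨p, m, hp, hxp⟩ := hep x hx
    exact mem_iUnion.mpr ⟨(p - 1, m), by rwa [Nat.sub_add_cancel hp]⟩
  obtain ⟨⟨p, m⟩, W, hW, ⟨x, hxW, hxV, hxX⟩, hWsub⟩ :=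
    exists_isOpen_inter_nonempty_subset_of_subset_iUnion
      (fun _ ↦ isClosed_setOf_shiftMap_iterate_eq _ _) hcover
  obtain ⟨N, hN⟩ := exists_cylinder_subset (hW.inter hV) ⟨hxW, hxV⟩
  refine ⟨x, hxX, hep x ⟨hxV, hxX⟩, _, isOpen_cylinder _ x _,
    cylinder_inter_eq_singleton_of_subset (m := m) (N := N) hxX p.succ_pos fun y hy ↦ ?_⟩
  exact hWsub ⟨(hN hy.1).1, (hN hy.1).2, hy.2⟩

/-- If a one-sided shift space `X` contains a nonempty (relatively) open set
consisting entirely of eventually periodic points, then `X` contains an isolated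
eventually periodic point. -/
theorem exists_isolated_eventuallyPeriodic {A : Type*} [Fintype A]
    [TopologicalSpace A] [DiscreteTopology A]
    (X : Set (ℕ → A)) (hX : IsShiftSpace X)
    (V : Set (ℕ → A)) (hV : IsOpen V) (hne : (V ∩ X).Nonempty)
    (hep : ∀ x ∈ V ∩ X, EventuallyPeriodic x) :
    ∃ x ∈ X, EventuallyPeriodic x ∧ ∃ U : Set (ℕ → A), IsOpen U ∧ U ∩ X = {x} :=
  exists_isolated_eventuallyPeriodic_general X hX V hV hne hep
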